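/- arXiv:0812.1603 — 11 statements merged into one kernel-verified Lean document; each statement's English description precedes it below -/
import Mathlib

section
/- Let R be a commutative ring, n a finite index type, and γ an invertible n×n matrix over R (its determinant is a unit). If the matrix γᵀ * γ⁻¹ * γᵀ is skew-symmetric, i.e. (γᵀ * γ⁻¹ * γᵀ)ᵀ = −(γᵀ * γ⁻¹ * γᵀ), then (γ⁻¹ * γᵀ)³ = −1 (the negative of the identity matrix). -/
/-!
Writing `A = γ⁻¹ * γᵀ` and `S = γᵀ * γ⁻¹ * γᵀ`, we have `A ^ 3 = γ⁻¹ * S * A`, while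
`Sᵀ = γ * γᵀ⁻¹ * γ` gives `γ⁻¹ * Sᵀ * A = 1`. Skew-symmetry `Sᵀ = -S` turns the second identity
into `A ^ 3 = -1`.
-/

open Matrix

namespace Matrix

variable {R : Type*} [CommRing R] {n : Type*} [Fintype n] [DecidableEq n]

theorem inv_mul_transpose_pow_three (γ : Matrix n n R) :
    (γ⁻¹ * γᵀ) ^ 3 = γ⁻¹ * (γᵀ * γ⁻¹ * γᵀ) * (γ⁻¹ * γᵀ) := by
  noncomm_ring

theorem inv_mul_transpose_mul_inv_mul_transpose_transpose_mul_eq_one (γ : Matrix n n R)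
    (hγ : IsUnit γ.det) : γ⁻¹ * (γᵀ * γ⁻¹ * γᵀ)ᵀ * (γ⁻¹ * γᵀ) = 1 := by
  have hγT : IsUnit γᵀ.det := by rwa [det_transpose]
  simp only [transpose_mul, transpose_transpose, transpose_nonsing_inv, ← mul_assoc,
    nonsing_inv_mul _ hγ, one_mul, mul_nonsing_inv_cancel_right _ _ hγ, nonsing_inv_mul _ hγT]

end Matrix

theorem inv_mul_transpose_cube_eq_neg_one {R : Type*} [CommRing R]
    {n : Type*} [Fintype n] [DecidableEq n]
    (γ : Matrix n n R) (hγ : IsUnit γ.det)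
    (hskew : (γᵀ * γ⁻¹ * γᵀ)ᵀ = -(γᵀ * γ⁻¹ * γᵀ)) :
    (γ⁻¹ * γᵀ) ^ 3 = -1 := by
  rw [inv_mul_transpose_pow_three,
    ← inv_mul_transpose_mul_inv_mul_transpose_transpose_mul_eq_one γ hγ, hskew, mul_neg, neg_mul,
    neg_neg]
end

section
/- Let q be a prime, n ≥ 1, and a an integer such that q does not divide a² − 4. Let γ₁ and γ₂ be invertible 2×2 matrices over ℤ/qⁿℤ (determinant a unit) each satisfying (γᵢ⁻¹ * γᵢᵀ)² = a • (γᵢ⁻¹ * γᵢᵀ) − 1. Then γ₁ and γ₂ are congruent: there exists an invertible 2×2 matrix ψ over ℤ/qⁿℤ such that γ₂ = ψᵀ * γ₁ * ψ. -/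
/-!
For `M = γ⁻¹ γᵀ` we have `det M = 1`, so by Cayley–Hamilton the relation says exactly
`tr M = a`, i.e. `(γ 0 1 - γ 1 0) ^ 2 = (2 - a) det γ`. Congruence by `ψ` multiplies
`γ 0 1 - γ 1 0` by `det ψ` and `det γ` by `(det ψ) ^ 2`, so a diagonal rescaling achieves
`γ 0 1 - γ 1 0 = 1` and `det γ = e := (2 - a)⁻¹`; from then on only congruences of
determinant one are used, and they act on the binary quadratic form `v ↦ vᵀ γ v`, whose
discriminant `1 - 4 e` is a unit. Over the residue field `ZMod q` a nondegenerate binary form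
represents `1`; a lift of such a vector is unimodular, so it is the first column of some
`ψ ∈ SL₂`, after which `γ 0 0 ≡ 1 mod q`. A shear and a fixed-point iteration (which terminates
because `q` is nilpotent) make `γ 0 0 = 1`, and a last shear gives the normal form
`!![1, 1; 0, e]`.
-/

open Polynomial in
theorem FiniteField.exists_binaryQuadratic_eq_one {K : Type*} [Field K] [Fintype K] {p b t : K}
    (h : b ^ 2 - 4 * (p * t) ≠ 0) : ∃ x y : K, p * x ^ 2 + b * (x * y) + t * y ^ 2 = 1 := by
  by_cases hp : p = 0
  · subst hp
    have hb : b ≠ 0 := by rintro rfl; simp at h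
    exact ⟨(1 - t) / b, 1, by field_simp; ring⟩
  by_cases hchar : ringChar K = 2
  · obtain ⟨r, hr⟩ := FiniteField.isSquare_of_char_two hchar p⁻¹
    exact ⟨r, 0, by rw [sq, ← hr, mul_inv_cancel₀ hp]; ring⟩
  have hcard : Fintype.card K % 2 = 1 := by
    have := FiniteField.even_card_iff_char_two.not.mp hchar
    omega
  have h2 : (2 : K) ≠ 0 := Ring.two_ne_zero hchar
  -- `4 p (p x ^ 2 + b x y + t y ^ 2) = (2 p x + b y) ^ 2 - (b ^ 2 - 4 p t) y ^ 2`
  obtain ⟨u, v, huv⟩ := FiniteField.exists_root_sum_quadratic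
    (f := C 1 * X ^ 2 + C 0 * X + C 0)
    (g := C (-(b ^ 2 - 4 * (p * t))) * X ^ 2 + C 0 * X + C (-(4 * p)))
    (degree_quadratic one_ne_zero) (degree_quadratic (neg_ne_zero.mpr h)) hcard
  simp only [eval_add, eval_mul, eval_pow, eval_C, eval_X, zero_mul, add_zero, one_mul] at huv
  refine ⟨(u - b * v) / (2 * p), v, ?_⟩
  field_simp
  linear_combination huv

theorem exists_add_mul_sq_eq_of_isNilpotent {R : Type*} [CommRing R] (t : R) {b : R}
    (hb : IsNilpotent b) : ∃ x, x + t * x ^ 2 = b := by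
  obtain ⟨N, hN⟩ := hb
  -- fixed-point iteration `x ↦ b - t x ^ 2`, which gains a factor of `b` at every step
  have iterate : ∀ k, ∃ x, b ∣ x ∧ b ^ (k + 1) ∣ x + t * x ^ 2 - b := by
    intro k
    induction k with
    | zero => exact ⟨0, dvd_zero b, ⟨-1, by ring⟩⟩
    | succ k ih =>
      obtain ⟨_, ⟨c, rfl⟩, r, hr⟩ := ih
      refine ⟨b * c - b ^ (k + 1) * r, dvd_sub (dvd_mul_right b c) (dvd_mul_of_dvd_left
        (dvd_pow_self b k.succ_ne_zero) r), ⟨-2 * t * c * r + t * b ^ k * r ^ 2, ?_⟩⟩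
      linear_combination hr
  obtain ⟨x, -, hx⟩ := iterate N
  rw [pow_succ, hN, zero_mul, zero_dvd_iff, sub_eq_zero] at hx
  exact ⟨x, hx⟩

theorem isUnit_of_map_ne_zero {R K : Type*} [CommRing R] [Field K] {φ : R →+* K}
    (hφ : Function.Surjective φ) (hker : ∀ x, φ x = 0 → IsNilpotent x) {x : R} (hx : φ x ≠ 0) :
    IsUnit x := by
  obtain ⟨y, hy⟩ := hφ (φ x)⁻¹
  have hnil : IsNilpotent (x * y - 1) := hker _ (by simp [hy, hx])
  exact isUnit_of_mul_isUnit_left (by simpa using hnil.isUnit_add_one)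

theorem ZMod.isNilpotent_of_castHom_eq_zero {q n : ℕ} (hn : n ≠ 0) {x : ZMod (q ^ n)}
    (hx : ZMod.castHom (dvd_pow_self q hn) (ZMod q) x = 0) : IsNilpotent x := by
  obtain ⟨m, rfl⟩ := ZMod.intCast_surjective x
  rw [map_intCast, ZMod.intCast_zmod_eq_zero_iff_dvd] at hx
  obtain ⟨k, rfl⟩ := hx
  exact ⟨n, by push_cast; rw [mul_pow, ← Nat.cast_pow, ZMod.natCast_self, zero_mul]⟩

namespace Matrix

section

variable {ι R : Type*} [Fintype ι] [DecidableEq ι] [CommRing R]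

def Congruent (A B : Matrix ι ι R) : Prop :=
  ∃ P : Matrix ι ι R, IsUnit P.det ∧ B = Pᵀ * A * P

namespace Congruent

theorem trans {A B C : Matrix ι ι R} (hAB : Congruent A B) (hBC : Congruent B C) :
    Congruent A C := by
  obtain ⟨P, hP, rfl⟩ := hAB
  obtain ⟨Q, hQ, rfl⟩ := hBC
  exact ⟨P * Q, by simpa [det_mul] using hP.mul hQ, by simp [transpose_mul, Matrix.mul_assoc]⟩

theorem symm {A B : Matrix ι ι R} (h : Congruent A B) : Congruent B A := by
  obtain ⟨P, hP, rfl⟩ := h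
  refine ⟨P⁻¹, isUnit_nonsing_inv_det P hP, ?_⟩
  rw [transpose_nonsing_inv, ← Matrix.mul_assoc, ← Matrix.mul_assoc,
    nonsing_inv_mul _ (by rwa [det_transpose]), Matrix.one_mul, Matrix.mul_assoc,
    mul_nonsing_inv _ hP, Matrix.mul_one]

theorem of_det_eq_one (A : Matrix ι ι R) {P : Matrix ι ι R} (hP : P.det = 1) :
    Congruent A (Pᵀ * A * P) :=
  ⟨P, hP ▸ isUnit_one, rfl⟩

end Congruent

theorem det_nonsing_inv_mul_transpose {A : Matrix ι ι R} (hA : IsUnit A.det) :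
    (A⁻¹ * Aᵀ).det = 1 := by
  rw [det_mul, det_nonsing_inv, det_transpose, Ring.inverse_mul_cancel _ hA]

end

section

variable {R : Type*} [CommRing R]

theorem trace_eq_of_sq_eq_smul_sub_one {M : Matrix (Fin 2) (Fin 2) R} {a : R} (hM : M.det = 1)
    (h : M ^ 2 = a • M - 1) : M.trace = a := by
  have h00 := congrFun (congrFun h 0) 0
  have h10 := congrFun (congrFun h 1) 0
  simp only [sq, mul_apply, Fin.sum_univ_two, sub_apply, smul_apply, smul_eq_mul, one_apply_eq,
    one_apply_ne (show (1 : Fin 2) ≠ 0 by decide), sub_zero] at h00 h10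
  rw [det_fin_two] at hM
  rw [trace_fin_two]
  -- by Cayley–Hamilton `(a - tr M) • M = 0`, and `M` is invertible as `det M = 1`
  linear_combination (a - (M 0 0 + M 1 1) + M 1 1) * hM + M 1 1 * h00 - M 0 1 * h10

theorem trace_nonsing_inv_mul_transpose_mul_det {γ : Matrix (Fin 2) (Fin 2) R}
    (hγ : IsUnit γ.det) : (γ⁻¹ * γᵀ).trace * γ.det = 2 * γ.det - (γ 0 1 - γ 1 0) ^ 2 := by
  rw [inv_def, smul_mul, trace_smul, smul_eq_mul, mul_right_comm, Ring.inverse_mul_cancel _ hγ,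
    one_mul]
  simp only [adjugate_fin_two, cons_mul, empty_mul, Equiv.symm_apply_apply, trace_fin_two, of_apply,
    cons_val', vecMul, dotProduct, transpose_apply, Fin.sum_univ_two, cons_val_zero, cons_val_one,
    cons_val_fin_one, det_fin_two]
  ring

theorem sq_sub_eq_of_sq_nonsing_inv_mul_transpose {γ : Matrix (Fin 2) (Fin 2) R} {a : R}
    (hγ : IsUnit γ.det) (h : (γ⁻¹ * γᵀ) ^ 2 = a • (γ⁻¹ * γᵀ) - 1) :
    (γ 0 1 - γ 1 0) ^ 2 = (2 - a) * γ.det := by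
  have htrace := trace_nonsing_inv_mul_transpose_mul_det hγ
  rw [trace_eq_of_sq_eq_smul_sub_one (det_nonsing_inv_mul_transpose hγ) h] at htrace
  linear_combination htrace

theorem transpose_mul_mul_apply_zero_zero (γ ψ : Matrix (Fin 2) (Fin 2) R) :
    (ψᵀ * γ * ψ) 0 0 =
      γ 0 0 * ψ 0 0 ^ 2 + (γ 0 1 + γ 1 0) * (ψ 0 0 * ψ 1 0) + γ 1 1 * ψ 1 0 ^ 2 := by
  simp only [mul_apply, transpose_apply, Fin.sum_univ_two]
  ring

theorem transpose_mul_mul_skew (γ ψ : Matrix (Fin 2) (Fin 2) R) :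
    (ψᵀ * γ * ψ) 0 1 - (ψᵀ * γ * ψ) 1 0 = ψ.det * (γ 0 1 - γ 1 0) := by
  simp only [mul_apply, transpose_apply, Fin.sum_univ_two, det_fin_two]
  ring

theorem exists_det_eq_one_of_isCoprime {x y : R} (h : IsCoprime x y) :
    ∃ ψ : Matrix (Fin 2) (Fin 2) R, ψ 0 0 = x ∧ ψ 1 0 = y ∧ ψ.det = 1 := by
  obtain ⟨u, v, huv⟩ := h
  exact ⟨!![x, -v; y, u], rfl, rfl, by rw [det_fin_two_of]; linear_combination huv⟩

end

section

variable {R : Type*} [CommRing R] {K : Type*} [Field K] [Fintype K] {φ : R →+* K}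

/-- A matrix with `γ 0 1 - γ 1 0 = 1` is determined by its quadratic form `v ↦ vᵀ γ v`. -/
def IsSkewNormalized (e : R) (γ : Matrix (Fin 2) (Fin 2) R) : Prop :=
  γ 0 1 - γ 1 0 = 1 ∧ γ.det = e

theorem exists_congruent_isSkewNormalized {e : R} {γ : Matrix (Fin 2) (Fin 2) R}
    (hγ : IsUnit γ.det) (h : (γ 0 1 - γ 1 0) ^ 2 * e = γ.det) :
    ∃ γ', Congruent γ γ' ∧ IsSkewNormalized e γ' := by
  have hc : IsUnit (γ 0 1 - γ 1 0) :=
    (isUnit_pow_iff two_ne_zero).mp (isUnit_of_mul_isUnit_left (h ▸ hγ))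
  obtain ⟨w, hw⟩ := hc.exists_right_inv
  set ψ : Matrix (Fin 2) (Fin 2) R := !![w, 0; 0, 1]
  have hψ : ψ.det = w := by simp [ψ, det_fin_two_of]
  refine ⟨ψᵀ * γ * ψ, ⟨ψ, hψ ▸ IsUnit.of_mul_eq_one_right _ hw, rfl⟩, ?_, ?_⟩
  · rw [transpose_mul_mul_skew, hψ]
    linear_combination hw
  · rw [det_mul, det_mul, det_transpose, hψ, ← h]
    linear_combination (w * (γ 0 1 - γ 1 0) + 1) * e * hw

namespace IsSkewNormalized

variable {e : R} {γ : Matrix (Fin 2) (Fin 2) R}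

theorem transpose_mul_mul (hγ : IsSkewNormalized e γ) {ψ : Matrix (Fin 2) (Fin 2) R}
    (hψ : ψ.det = 1) : IsSkewNormalized e (ψᵀ * γ * ψ) :=
  ⟨by rw [transpose_mul_mul_skew, hψ, one_mul, hγ.1], by simp [det_mul, hψ, hγ.2]⟩

theorem discr_eq (hγ : IsSkewNormalized e γ) :
    (γ 0 1 + γ 1 0) ^ 2 - 4 * (γ 0 0 * γ 1 1) = 1 - 4 * e := by
  have hdet := hγ.2
  rw [det_fin_two] at hdet
  linear_combination (γ 0 1 - γ 1 0 + 1) * hγ.1 - 4 * hdet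

theorem exists_congruent_upperTriangular (hγ : IsSkewNormalized e γ) (hp : IsUnit (γ 0 0)) :
    ∃ t, γ 0 0 * t = e ∧ Congruent γ !![γ 0 0, 1; 0, t] := by
  obtain ⟨w, hw⟩ := hp.exists_right_inv
  set ψ : Matrix (Fin 2) (Fin 2) R := !![1, w * (1 - γ 0 1); 0, 1]
  have hψ : ψ.det = 1 := by simp [ψ, det_fin_two_of]
  have hshear : ψᵀ * γ * ψ = !![γ 0 0, 1; 0, (ψᵀ * γ * ψ) 1 1] := by
    ext i j
    fin_cases i <;> fin_cases j <;>
      simp only [ψ, Fin.zero_eta, Fin.mk_one, mul_apply, transpose_apply, of_apply, cons_val',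
        cons_val_zero, cons_val_one, cons_val_fin_one, Fin.sum_univ_two, one_mul, mul_one,
        zero_mul, mul_zero, add_zero]
    · linear_combination (1 - γ 0 1) * hw
    · linear_combination (1 - γ 0 1) * hw - hγ.1
  refine ⟨_, ?_, hshear ▸ Congruent.of_det_eq_one γ hψ⟩
  have hdet := (hγ.transpose_mul_mul hψ).2
  rw [hshear, det_fin_two_of] at hdet
  linear_combination hdet

theorem congruent_of_isNilpotent_one_sub (hγ : IsSkewNormalized e γ)
    (h : IsNilpotent (1 - γ 0 0)) : Congruent γ !![1, 1; 0, e] := by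
  obtain ⟨t, hpt, hγA⟩ :=
    hγ.exists_congruent_upperTriangular (by simpa using h.isUnit_one_sub)
  have hA : IsSkewNormalized e !![γ 0 0, 1; 0, t] := ⟨by simp, by simp [det_fin_two_of, hpt]⟩
  obtain ⟨y, hy⟩ := exists_add_mul_sq_eq_of_isNilpotent t h
  set ψ : Matrix (Fin 2) (Fin 2) R := !![1, 0; y, 1]
  have hψ : ψ.det = 1 := by simp [ψ, det_fin_two_of]
  have h00 : (ψᵀ * !![γ 0 0, 1; 0, t] * ψ) 0 0 = 1 := by
    rw [transpose_mul_mul_apply_zero_zero]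
    simp only [ψ, of_apply, cons_val', cons_val_zero, cons_val_one, cons_val_fin_one, one_pow,
      mul_one, one_mul, add_zero]
    linear_combination hy
  obtain ⟨t', ht', hB⟩ :=
    (hA.transpose_mul_mul hψ).exists_congruent_upperTriangular (by rw [h00]; exact isUnit_one)
  rw [h00, one_mul] at ht'
  rw [h00, ht'] at hB
  exact hγA.trans ((Congruent.of_det_eq_one _ hψ).trans hB)

theorem exists_congruent_map_apply_zero_zero_eq_one (hφ : Function.Surjective φ)
    (hker : ∀ x, φ x = 0 → IsNilpotent x) (hγ : IsSkewNormalized e γ)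
    (he : IsUnit (1 - 4 * e)) :
    ∃ γ', Congruent γ γ' ∧ IsSkewNormalized e γ' ∧ φ (γ' 0 0) = 1 := by
  have hdiscr : φ (γ 0 1 + γ 1 0) ^ 2 - 4 * (φ (γ 0 0) * φ (γ 1 1)) ≠ 0 := by
    simpa [← hγ.discr_eq, map_ofNat φ 4] using (he.map φ).ne_zero
  obtain ⟨x₀, y₀, hxy₀⟩ := FiniteField.exists_binaryQuadratic_eq_one hdiscr
  obtain ⟨x, rfl⟩ := hφ x₀
  obtain ⟨y, rfl⟩ := hφ y₀
  have hcop : IsCoprime x y := by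
    by_cases hx : φ x = 0
    · have hy : φ y ≠ 0 := by rintro hy; simp [hx, hy] at hxy₀
      exact (isCoprime_one_left.of_isCoprime_of_dvd_left
        (isUnit_of_map_ne_zero hφ hker hy).dvd).symm
    · exact isCoprime_one_left.of_isCoprime_of_dvd_left (isUnit_of_map_ne_zero hφ hker hx).dvd
  obtain ⟨ψ, hψx, hψy, hψ⟩ := exists_det_eq_one_of_isCoprime hcop
  refine ⟨ψᵀ * γ * ψ, Congruent.of_det_eq_one γ hψ, hγ.transpose_mul_mul hψ, ?_⟩
  rw [transpose_mul_mul_apply_zero_zero, hψx, hψy]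
  simpa using hxy₀

theorem congruent_normalForm (hφ : Function.Surjective φ)
    (hker : ∀ x, φ x = 0 → IsNilpotent x) (hγ : IsSkewNormalized e γ)
    (he : IsUnit (1 - 4 * e)) : Congruent γ !![1, 1; 0, e] := by
  obtain ⟨γ', hγγ', hγ', h00⟩ := hγ.exists_congruent_map_apply_zero_zero_eq_one hφ hker he
  exact hγγ'.trans (hγ'.congruent_of_isNilpotent_one_sub (hker _ (by simp [h00])))

end IsSkewNormalized

theorem congruent_normalForm_of_sq_nonsing_inv_mul_transpose (hφ : Function.Surjective φ)
    (hker : ∀ x, φ x = 0 → IsNilpotent x) {a e : R} (he : (2 - a) * e = 1) (ha : IsUnit (2 + a))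
    {γ : Matrix (Fin 2) (Fin 2) R} (hγ : IsUnit γ.det)
    (h : (γ⁻¹ * γᵀ) ^ 2 = a • (γ⁻¹ * γᵀ) - 1) : Congruent γ !![1, 1; 0, e] := by
  have h4e : IsUnit (1 - 4 * e) := by
    have : (2 - a) * (1 - 4 * e) = -(2 + a) := by linear_combination -4 * he
    exact isUnit_of_mul_isUnit_right (this ▸ ha.neg)
  obtain ⟨γ', hγγ', hγ'⟩ := exists_congruent_isSkewNormalized (e := e) hγ
    (by rw [sq_sub_eq_of_sq_nonsing_inv_mul_transpose hγ h]; linear_combination γ.det * he)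
  exact hγγ'.trans (hγ'.congruent_normalForm hφ hker h4e)

theorem congruent_of_sq_nonsing_inv_mul_transpose (hφ : Function.Surjective φ)
    (hker : ∀ x, φ x = 0 → IsNilpotent x) {a : R} (ha : IsUnit (4 - a ^ 2))
    {γ₁ γ₂ : Matrix (Fin 2) (Fin 2) R} (h₁ : IsUnit γ₁.det) (h₂ : IsUnit γ₂.det)
    (hrel₁ : (γ₁⁻¹ * γ₁ᵀ) ^ 2 = a • (γ₁⁻¹ * γ₁ᵀ) - 1)
    (hrel₂ : (γ₂⁻¹ * γ₂ᵀ) ^ 2 = a • (γ₂⁻¹ * γ₂ᵀ) - 1) : Congruent γ₁ γ₂ := by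
  rw [show 4 - a ^ 2 = (2 - a) * (2 + a) by ring] at ha
  obtain ⟨e, he⟩ := (isUnit_of_mul_isUnit_left ha).exists_right_inv
  have h2a := isUnit_of_mul_isUnit_right ha
  exact (congruent_normalForm_of_sq_nonsing_inv_mul_transpose hφ hker he h2a h₁ hrel₁).trans
    (congruent_normalForm_of_sq_nonsing_inv_mul_transpose hφ hker he h2a h₂ hrel₂).symm

end

end Matrix

open Matrix

theorem unique_gamma_with_quadratic_relation (q n : ℕ) (hq : q.Prime) (hn : 1 ≤ n)
    (a : ℤ) (ha : ¬ (q : ℤ) ∣ a ^ 2 - 4)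
    (γ₁ γ₂ : Matrix (Fin 2) (Fin 2) (ZMod (q ^ n)))
    (h₁ : IsUnit γ₁.det) (h₂ : IsUnit γ₂.det)
    (hrel₁ : (γ₁⁻¹ * γ₁ᵀ) ^ 2 = (a : ZMod (q ^ n)) • (γ₁⁻¹ * γ₁ᵀ) - 1)
    (hrel₂ : (γ₂⁻¹ * γ₂ᵀ) ^ 2 = (a : ZMod (q ^ n)) • (γ₂⁻¹ * γ₂ᵀ) - 1) :
    ∃ ψ : Matrix (Fin 2) (Fin 2) (ZMod (q ^ n)),
      IsUnit ψ.det ∧ γ₂ = ψᵀ * γ₁ * ψ := by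
  have : Fact q.Prime := ⟨hq⟩
  have hn₀ : n ≠ 0 := by omega
  have hφ := ZMod.ringHom_surjective (ZMod.castHom (dvd_pow_self q hn₀) (ZMod q))
  have hker := fun x : ZMod (q ^ n) => ZMod.isNilpotent_of_castHom_eq_zero (x := x) hn₀
  have hq4 : ¬ (q : ℤ) ∣ 4 - a ^ 2 := by rwa [← dvd_neg, neg_sub]
  have h4a := isUnit_of_map_ne_zero hφ hker (x := ((4 - a ^ 2 : ℤ) : ZMod (q ^ n)))
    (by rwa [map_intCast, Ne, ZMod.intCast_zmod_eq_zero_iff_dvd])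
  push_cast at h4a
  exact congruent_of_sq_nonsing_inv_mul_transpose hφ hker h4a h₁ h₂ hrel₁ hrel₂
end

section
/- Let q be a prime, n ≥ 1, and a an integer such that q does not divide a² − 4. Let γ be an invertible 2×2 matrix over ℤ/qⁿℤ (determinant a unit) such that x := γ⁻¹ * γᵀ satisfies x² = a • x − 1. Then the reduction of x modulo q (obtained by applying the canonical ring homomorphism ℤ/qⁿℤ → ℤ/qℤ to every entry) is not a scalar matrix, i.e. there is no c in ℤ/qℤ such that this reduction equals c • 1. -/
/-!
If `x = γ⁻¹ γᵀ` reduces to a scalar `c` modulo `q`, then `γ̄ᵀ = c γ̄`; transposing once more gives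
`γ̄ = c² γ̄`, so `c² = 1` since `γ̄` is invertible. The quadratic relation reduces to
`c² = a c - 1`, whence `a c = 2`, `a = 2c` and `a² = 4c² = 4` in `ℤ/qℤ`, i.e. `q ∣ a² - 4`.
-/

open Matrix

namespace Matrix

variable {n R : Type*} [Fintype n] [DecidableEq n] [Nonempty n] [CommRing R]

theorem mul_self_eq_one_of_transpose_eq_smul {γ : Matrix n n R} {c : R} (hγ : IsUnit γ.det)
    (h : γᵀ = c • γ) : c * c = 1 := by
  have hγγ : (c * c) • γ = γ := by
    rw [mul_smul, ← h, ← transpose_smul, ← h, transpose_transpose]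
  have hsc : scalar n (c * c) = scalar n 1 := by
    simpa [← smul_one_eq_diagonal, smul_mul, mul_nonsing_inv _ hγ] using
      congrArg (· * γ⁻¹) hγγ
  exact scalar_inj.mp hsc

theorem sq_eq_mul_sub_one_of_smul_one_sq_eq {a c : R}
    (h : (c • 1 : Matrix n n R) ^ 2 = a • c • 1 - 1) : c ^ 2 = a * c - 1 := by
  rw [← scalar_inj (n := n)]
  simpa [← smul_one_eq_diagonal, smul_smul, sq, sub_smul] using h

end Matrix

theorem sq_eq_four_of_mul_self_eq_one {R : Type*} [CommRing R] {a c : R} (hc : c * c = 1)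
    (hrel : c ^ 2 = a * c - 1) : a ^ 2 = 4 := by
  linear_combination (a + 2 * c) * ((c - a) * hc - c * hrel) + 4 * hc

theorem reduction_not_scalar_general (q n : ℕ) (hn : 1 ≤ n)
    (a : ℤ) (ha : ¬ (q : ℤ) ∣ a ^ 2 - 4)
    (γ : Matrix (Fin 2) (Fin 2) (ZMod (q ^ n))) (hγ : IsUnit γ.det)
    (hrel : (γ⁻¹ * γᵀ) ^ 2 = (a : ZMod (q ^ n)) • (γ⁻¹ * γᵀ) - 1) :
    ¬ ∃ c : ZMod q,
      (γ⁻¹ * γᵀ).map (ZMod.castHom (dvd_pow_self q (Nat.one_le_iff_ne_zero.mp hn)) (ZMod q))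
        = c • (1 : Matrix (Fin 2) (Fin 2) (ZMod q)) := by
  rintro ⟨c, hc⟩
  set f := ZMod.castHom (dvd_pow_self q (Nat.one_le_iff_ne_zero.mp hn)) (ZMod q)
  have hx : f.mapMatrix (γ⁻¹ * γᵀ) = c • 1 := hc
  have hγf : IsUnit (f.mapMatrix γ).det := f.map_det γ ▸ hγ.map f
  have htr : (f.mapMatrix γ)ᵀ = c • f.mapMatrix γ := by
    have := congrArg f.mapMatrix (mul_nonsing_inv_cancel_left γ γᵀ hγ)
    rw [map_mul, hx, Matrix.mul_smul, mul_one] at this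
    exact this.symm
  have hrel' : (c • 1 : Matrix (Fin 2) (Fin 2) (ZMod q)) ^ 2 = (a : ZMod q) • c • 1 - 1 := by
    have := congrArg f.mapMatrix hrel
    rw [map_pow, map_sub, map_one, hx, RingHom.mapMatrix_apply,
      Matrix.map_smul' _ _ _ f.map_mul, ← RingHom.mapMatrix_apply, hx, map_intCast] at this
    exact this
  apply ha
  rw [← ZMod.intCast_zmod_eq_zero_iff_dvd]
  push_cast
  linear_combination sq_eq_four_of_mul_self_eq_one (mul_self_eq_one_of_transpose_eq_smul hγf htr)
    (sq_eq_mul_sub_one_of_smul_one_sq_eq hrel')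

theorem reduction_not_scalar (q n : ℕ) (hq : q.Prime) (hn : 1 ≤ n)
    (a : ℤ) (ha : ¬ (q : ℤ) ∣ a ^ 2 - 4)
    (γ : Matrix (Fin 2) (Fin 2) (ZMod (q ^ n))) (hγ : IsUnit γ.det)
    (hrel : (γ⁻¹ * γᵀ) ^ 2 = (a : ZMod (q ^ n)) • (γ⁻¹ * γᵀ) - 1) :
    ¬ ∃ c : ZMod q,
      (γ⁻¹ * γᵀ).map (ZMod.castHom (dvd_pow_self q (Nat.one_le_iff_ne_zero.mp hn)) (ZMod q))
        = c • (1 : Matrix (Fin 2) (Fin 2) (ZMod q)) :=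
  reduction_not_scalar_general q n hn a ha γ hγ hrel
end

section
/- Let q be a prime, n ≥ 1, and a an element of ℤ/qⁿℤ. Let x be a 2×2 matrix over ℤ/qⁿℤ with trace a and determinant 1, and suppose that the reduction of x modulo q (applying the canonical ring homomorphism ℤ/qⁿℤ → ℤ/qℤ to every entry) is not a scalar matrix. Then x is conjugate over ℤ/qⁿℤ to the matrix !![a, 1; −1, 0]: there exists an invertible 2×2 matrix P over ℤ/qⁿℤ with P * x * P⁻¹ = !![a, 1; −1, 0]. -/
/-!
If the reduction `x̄` of `x` is not scalar, some vector `w` over `ℤ/qℤ` makes `x̄ w, w` a basis.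
Any lift `v` of `w` makes `x v, v` a basis over `ℤ/qⁿℤ`, because an element of `ℤ/qⁿℤ` is a unit
as soon as its reduction mod `q` is nonzero. By Cayley–Hamilton `x² = a x - 1`, so in this basis
`x` acts as `!![a, 1; -1, 0]`.
-/

open Matrix

namespace Matrix

variable {R S : Type*} [CommRing R] [CommRing S]

def cyclicMatrix (x : Matrix (Fin 2) (Fin 2) R) (v : Fin 2 → R) : Matrix (Fin 2) (Fin 2) R :=
  of fun i => ![(x *ᵥ v) i, v i]

lemma det_cyclicMatrix (x : Matrix (Fin 2) (Fin 2) R) (v : Fin 2 → R) :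
    (cyclicMatrix x v).det = (x *ᵥ v) 0 * v 1 - v 0 * (x *ᵥ v) 1 := by
  simp [cyclicMatrix, det_fin_two]

lemma cyclicMatrix_map (f : R →+* S) (x : Matrix (Fin 2) (Fin 2) R) (v : Fin 2 → R) :
    (cyclicMatrix x v).map f = cyclicMatrix (x.map f) (f ∘ v) := by
  ext i j
  fin_cases j
  · exact RingHom.map_mulVec f x v i
  · rfl

lemma mul_cyclicMatrix (x : Matrix (Fin 2) (Fin 2) R) (v : Fin 2 → R) :
    x * cyclicMatrix x v = cyclicMatrix x v * !![x.trace, 1; -x.det, 0] := by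
  ext i j
  fin_cases i <;> fin_cases j <;>
    simp [cyclicMatrix, mul_apply, mulVec, dotProduct, Fin.sum_univ_two, trace_fin_two,
      det_fin_two] <;> ring

lemma exists_det_cyclicMatrix_ne_zero {x : Matrix (Fin 2) (Fin 2) R}
    (hx : ¬ ∃ c : R, x = c • 1) : ∃ v, (cyclicMatrix x v).det ≠ 0 := by
  simp only [det_cyclicMatrix]
  by_cases h10 : x 1 0 = 0
  · by_cases h01 : x 0 1 = 0
    · refine ⟨![1, 1], ?_⟩
      have hdiag : x 0 0 ≠ x 1 1 := by
        rintro hdiag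
        refine hx ⟨x 0 0, ?_⟩
        ext i j
        fin_cases i <;> fin_cases j <;> simp [h10, h01, hdiag]
      simpa [mulVec, dotProduct, h10, h01, sub_eq_zero] using hdiag
    · exact ⟨![0, 1], by simpa [mulVec, dotProduct] using h01⟩
  · exact ⟨![1, 0], by simpa [mulVec, dotProduct] using h10⟩

lemma inv_mul_mul_eq_of_mul_eq {n : Type*} [Fintype n] [DecidableEq n] {x Q C : Matrix n n R}
    (hQ : IsUnit Q.det) (h : x * Q = Q * C) : Q⁻¹ * x * Q = C := by
  rw [Matrix.mul_assoc, h, ← Matrix.mul_assoc, nonsing_inv_mul _ hQ, Matrix.one_mul]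

end Matrix

lemma ZMod.isUnit_iff_castHom_ne_zero {p d : ℕ} (hp : p.Prime) (hd : d ≠ 0) (u : ZMod (p ^ d)) :
    IsUnit u ↔ ZMod.castHom (dvd_pow_self p hd) (ZMod p) u ≠ 0 := by
  have : NeZero p := ⟨hp.ne_zero⟩
  obtain ⟨a, rfl⟩ := ZMod.natCast_zmod_surjective u
  rw [isUnit_natCast_iff_not_dvd_pow hp (Nat.pos_of_ne_zero hd), map_natCast, Ne,
    ZMod.natCast_eq_zero_iff]

theorem conjugate_to_companion (q n : ℕ) (hq : q.Prime) (hn : 1 ≤ n)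
    (a : ZMod (q ^ n)) (x : Matrix (Fin 2) (Fin 2) (ZMod (q ^ n)))
    (htr : x.trace = a) (hdet : x.det = 1)
    (hns : ¬ ∃ c : ZMod q,
      x.map (ZMod.castHom (dvd_pow_self q (Nat.one_le_iff_ne_zero.mp hn)) (ZMod q))
        = c • (1 : Matrix (Fin 2) (Fin 2) (ZMod q))) :
    ∃ P : Matrix (Fin 2) (Fin 2) (ZMod (q ^ n)),
      IsUnit P.det ∧ P * x * P⁻¹ = !![a, 1; -1, 0] := by
  set f := ZMod.castHom (dvd_pow_self q (Nat.one_le_iff_ne_zero.mp hn)) (ZMod q)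
  obtain ⟨w, hw⟩ := exists_det_cyclicMatrix_ne_zero hns
  obtain ⟨v, rfl⟩ : ∃ v, f ∘ v = w := (ZMod.castHom_surjective _).comp_left w
  set Q := cyclicMatrix x v
  have hQ : IsUnit Q.det := by
    rwa [ZMod.isUnit_iff_castHom_ne_zero hq (Nat.one_le_iff_ne_zero.mp hn), RingHom.map_det,
      RingHom.mapMatrix_apply, cyclicMatrix_map]
  refine ⟨Q⁻¹, isUnit_nonsing_inv_det Q hQ, ?_⟩
  rw [nonsing_inv_nonsing_inv Q hQ, inv_mul_mul_eq_of_mul_eq hQ (mul_cyclicMatrix x v), htr, hdet]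
end

section
/- Let q be a prime and let a, d be elements of ℤ/qℤ with a² ≠ 4 and d ≠ 0. Then there exist y, t in ℤ/qℤ such that y² + a*y*t + t² = d and 2*y + a*t ≠ 0. -/
/-!
In characteristic `≠ 2`,
`4 * (y ^ 2 + a * y * t + t ^ 2) = (2 * y + a * t) ^ 2 + (4 - a ^ 2) * t ^ 2`,
so it suffices to write `4 * d = u ^ 2 + c * t ^ 2` with `c = 4 - a ^ 2 ≠ 0` and `u ≠ 0`. Over a
finite field of odd order the form `u ^ 2 + c * t ^ 2` represents everything (the sets of values
of `u ^ 2` and of `e - c * t ^ 2` each have more than half the elements), and a representation with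
`u = 0` is turned into one with `u ≠ 0` by intersecting the conic with a line through that point.
The primes `2` and `3` are checked by computation.
-/

open Polynomial

section Field

variable {K : Type*} [Field K]

lemma exists_ne_zero_one_add_mul_sq_ne_zero (h2 : (2 : K) ≠ 0) (h3 : (3 : K) ≠ 0) (c : K) :
    ∃ m : K, m ≠ 0 ∧ 1 + c * m ^ 2 ≠ 0 := by
  by_cases h1 : 1 + c * 1 ^ 2 = 0
  · refine ⟨2, h2, fun h4 => h3 ?_⟩
    linear_combination 4 * h1 - h4
  · exact ⟨1, one_ne_zero, h1⟩

/-- The second intersection of the conic `u ^ 2 + c * s ^ 2 = c * t ^ 2` with the line of slope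
`m` through its point `(0, t)`. -/
lemma exists_sq_add_mul_sq_eq_mul_sq_of_ne_zero (h2 : (2 : K) ≠ 0) {c t m : K} (hc : c ≠ 0)
    (ht : t ≠ 0) (hm : m ≠ 0) (hcm : 1 + c * m ^ 2 ≠ 0) :
    ∃ u s : K, u ^ 2 + c * s ^ 2 = c * t ^ 2 ∧ u ≠ 0 := by
  set w := -(2 * c * t * m) / (1 + c * m ^ 2)
  have hw : w * (1 + c * m ^ 2) = -(2 * c * t * m) := div_mul_cancel₀ _ hcm
  refine ⟨w, t + m * w, by linear_combination w * hw, ?_⟩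
  exact div_ne_zero (neg_ne_zero.mpr (mul_ne_zero (mul_ne_zero (mul_ne_zero h2 hc) ht) hm)) hcm

lemma exists_sq_add_mul_sq_eq_and_ne_zero_of_exists (h2 : (2 : K) ≠ 0) (h3 : (3 : K) ≠ 0)
    {c e : K} (hc : c ≠ 0) (he : e ≠ 0) (h : ∃ u t : K, u ^ 2 + c * t ^ 2 = e) :
    ∃ u t : K, u ^ 2 + c * t ^ 2 = e ∧ u ≠ 0 := by
  obtain ⟨u, t, hut⟩ := h
  by_cases hu : u = 0
  · rw [hu, zero_pow two_ne_zero, zero_add] at hut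
    have ht : t ≠ 0 := by rintro rfl; simp [← hut] at he
    obtain ⟨m, hm, hcm⟩ := exists_ne_zero_one_add_mul_sq_ne_zero h2 h3 c
    exact hut ▸ exists_sq_add_mul_sq_eq_mul_sq_of_ne_zero h2 hc ht hm hcm
  · exact ⟨u, t, hut, hu⟩

lemma exists_sq_add_mul_mul_add_sq_eq_of_sq_add_mul_sq (h2 : (2 : K) ≠ 0) {a d u t : K}
    (hut : u ^ 2 + (4 - a ^ 2) * t ^ 2 = 4 * d) (hu : u ≠ 0) :
    ∃ y t : K, y ^ 2 + a * y * t + t ^ 2 = d ∧ 2 * y + a * t ≠ 0 := by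
  have h4 : (4 : K) ≠ 0 := by simpa [show (4 : K) = 2 ^ 2 by norm_num] using h2
  have hy : 2 * ((u - a * t) / 2) = u - a * t := mul_div_cancel₀ _ h2
  refine ⟨(u - a * t) / 2, t, mul_left_cancel₀ h4 ?_, by rwa [hy, sub_add_cancel]⟩
  linear_combination (2 * ((u - a * t) / 2) + u + a * t) * hy + hut

end Field

lemma FiniteField.exists_sq_add_mul_sq_eq {F : Type*} [Field F] [Fintype F] (h2 : (2 : F) ≠ 0)
    (c e : F) (hc : c ≠ 0) : ∃ u t : F, u ^ 2 + c * t ^ 2 = e := by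
  have hcard : Fintype.card F % 2 = 1 :=
    FiniteField.odd_card_of_char_ne_two fun h =>
      h2 (by simpa [h] using ringChar.Nat.cast_ringChar (R := F))
  obtain ⟨u, t, hut⟩ := FiniteField.exists_root_sum_quadratic (degree_X_pow 2)
    (f := X ^ 2) (g := C c * X ^ 2 - C e) (by compute_degree!) hcard
  refine ⟨u, t, ?_⟩
  simp only [eval_sub, eval_mul, eval_pow, eval_X, eval_C] at hut
  linear_combination hut

lemma FiniteField.exists_sq_add_mul_mul_add_sq_eq {F : Type*} [Field F] [Fintype F]
    (h2 : (2 : F) ≠ 0) (h3 : (3 : F) ≠ 0) {a d : F} (ha : a ^ 2 ≠ 4) (hd : d ≠ 0) :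
    ∃ y t : F, y ^ 2 + a * y * t + t ^ 2 = d ∧ 2 * y + a * t ≠ 0 := by
  have hc : 4 - a ^ 2 ≠ 0 := sub_ne_zero.mpr ha.symm
  have h4d : 4 * d ≠ 0 := mul_ne_zero (by simpa [show (4 : F) = 2 ^ 2 by norm_num] using h2) hd
  obtain ⟨u, t, hut, hu⟩ := exists_sq_add_mul_sq_eq_and_ne_zero_of_exists h2 h3 hc h4d
    (FiniteField.exists_sq_add_mul_sq_eq h2 _ _ hc)
  exact exists_sq_add_mul_mul_add_sq_eq_of_sq_add_mul_sq h2 hut hu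

lemma ZMod.natCast_ne_zero_of_prime {p q : ℕ} (hp : p.Prime) (hq : q.Prime) (hpq : p ≠ q) :
    (p : ZMod q) ≠ 0 := by
  rw [Ne, ZMod.natCast_eq_zero_iff]
  exact fun h => hpq ((Nat.prime_dvd_prime_iff_eq hq hp).mp h).symm

theorem exists_representation_mod_q (q : ℕ) (hq : q.Prime) (a d : ZMod q)
    (ha : a ^ 2 ≠ 4) (hd : d ≠ 0) :
    ∃ y t : ZMod q, y ^ 2 + a * y * t + t ^ 2 = d ∧ 2 * y + a * t ≠ 0 := by
  have : Fact q.Prime := ⟨hq⟩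
  obtain rfl | hq2 := eq_or_ne q 2
  · revert a d; decide
  obtain rfl | hq3 := eq_or_ne q 3
  · revert a d; decide
  exact FiniteField.exists_sq_add_mul_mul_add_sq_eq
    (by exact_mod_cast ZMod.natCast_ne_zero_of_prime Nat.prime_two hq hq2.symm)
    (by exact_mod_cast ZMod.natCast_ne_zero_of_prime Nat.prime_three hq hq3.symm) ha hd
end

section
/- Let q be a prime, n ≥ 1, and a an integer such that q does not divide a² − 4. Then for every unit u of the ring ℤ/qⁿℤ there exist y, t in ℤ/qⁿℤ such that y² + a*y*t + t² = u. -/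
/-!
Modulo `q` the form is, up to the unit `4`, the diagonal form `(2y + at)² + (4 - a²)t²`, and a
nondegenerate binary form over a finite field of odd order represents every element (for `q = 2`
the only unit is `1 = 1²`). As `a² - 4` is a unit, a representation of a unit is a smooth point
of the conic, so Hensel's lemma lifts it to a representation in `ℤ_[q]`, which is then reduced
modulo `qⁿ`.
-/

open Polynomial

section Field

variable {F : Type*} [Field F]

theorem FiniteField.exists_sq_add_mul_add_sq_eq [Fintype F] (hF : ringChar F ≠ 2) {a : F}
    (ha : a ^ 2 ≠ 4) (c : F) : ∃ y t : F, y ^ 2 + a * y * t + t ^ 2 = c := by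
  have h4 : (4 : F) - a ^ 2 ≠ 0 := sub_ne_zero.mpr ha.symm
  obtain ⟨x, t, hxt⟩ := FiniteField.exists_root_sum_quadratic
    (f := X ^ 2 - C (4 * c)) (g := C (4 - a ^ 2) * X ^ 2)
    (degree_X_pow_sub_C two_pos _) (degree_C_mul_X_pow 2 h4)
    (FiniteField.odd_card_of_char_ne_two hF)
  simp only [eval_sub, eval_pow, eval_X, eval_C, eval_mul] at hxt
  have h2 : (2 : F) ≠ 0 := Ring.two_ne_zero hF
  refine ⟨(x - a * t) / 2, t, ?_⟩
  field_simp
  linear_combination hxt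

theorem two_mul_add_mul_ne_zero_or_of_sq_add_mul_add_sq_ne_zero {a y t : F} (ha : a ^ 2 ≠ 4)
    (h : y ^ 2 + a * y * t + t ^ 2 ≠ 0) : 2 * y + a * t ≠ 0 ∨ 2 * t + a * y ≠ 0 := by
  by_contra! hyt
  obtain ⟨hy, ht⟩ := hyt
  have h4 : (4 : F) - a ^ 2 ≠ 0 := sub_ne_zero.mpr ha.symm
  have hy0 : y = 0 := by
    refine (mul_eq_zero.mp ?_).resolve_left h4
    linear_combination 2 * hy - a * ht
  have ht0 : t = 0 := by
    refine (mul_eq_zero.mp ?_).resolve_left h4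
    linear_combination 2 * ht - a * hy
  simp [hy0, ht0] at h

end Field

theorem ZMod.exists_sq_add_mul_add_sq_eq_and_two_mul_add_ne_zero {q : ℕ} [Fact q.Prime]
    {a c : ZMod q} (ha : a ^ 2 ≠ 4) (hc : c ≠ 0) :
    ∃ y t : ZMod q, y ^ 2 + a * y * t + t ^ 2 = c ∧ 2 * y + a * t ≠ 0 := by
  obtain ⟨y, t, hyt⟩ : ∃ y t : ZMod q, y ^ 2 + a * y * t + t ^ 2 = c := by
    by_cases hq : q = 2
    · subst hq
      refine ⟨1, 0, ?_⟩
      fin_cases c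
      · exact absurd rfl hc
      · rfl
    · exact FiniteField.exists_sq_add_mul_add_sq_eq (by rwa [ZMod.ringChar_zmod_n]) ha c
  rcases two_mul_add_mul_ne_zero_or_of_sq_add_mul_add_sq_ne_zero ha (hyt ▸ hc) with h | h
  · exact ⟨y, t, hyt, h⟩
  · exact ⟨t, y, by linear_combination hyt, h⟩

namespace PadicInt

variable {p : ℕ} [Fact p.Prime]

theorem toZMod_eq_zero_iff_norm_lt_one {z : ℤ_[p]} : toZMod z = 0 ↔ ‖z‖ < 1 := by
  rw [← RingHom.mem_ker, ker_toZMod, IsLocalRing.mem_maximalIdeal, mem_nonunits]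

theorem toZMod_ne_zero_iff_isUnit {z : ℤ_[p]} : toZMod z ≠ 0 ↔ IsUnit z := by
  rw [Ne, toZMod_eq_zero_iff_norm_lt_one, not_lt, isUnit_iff]
  exact ⟨fun h => le_antisymm (norm_le_one z) h, fun h => h.ge⟩

theorem exists_sq_add_mul_add_sq_eq_of_toZMod {a u y₀ t : ℤ_[p]}
    (h : toZMod (y₀ ^ 2 + a * y₀ * t + t ^ 2) = toZMod u)
    (hd : toZMod (2 * y₀ + a * t) ≠ 0) :
    ∃ y, y ^ 2 + a * y * t + t ^ 2 = u := by
  set f : ℤ_[p][X] := X ^ 2 + C (a * t) * X + C (t ^ 2 - u)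
  have hf : ∀ y, f.aeval y = y ^ 2 + a * y * t + t ^ 2 - u := fun y => by
    simp only [f, map_add, map_pow, map_mul, aeval_X, aeval_C, Algebra.algebraMap_self,
      RingHom.id_apply]
    ring
  have hf' : f.derivative.aeval y₀ = 2 * y₀ + a * t := by
    simp only [f, derivative_add, derivative_X_pow, derivative_C_mul_X, derivative_C, add_zero]
    simp only [map_add, map_mul, Nat.add_one_sub_one, pow_one, aeval_X, aeval_C,
      Algebra.algebraMap_self, RingHom.id_apply, Nat.cast_ofNat]
  have hnorm : ‖f.aeval y₀‖ < ‖f.derivative.aeval y₀‖ ^ 2 := by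
    rw [hf', isUnit_iff.mp (toZMod_ne_zero_iff_isUnit.mp hd), one_pow, hf,
      ← toZMod_eq_zero_iff_norm_lt_one, map_sub, h, sub_self]
  obtain ⟨y, hy, -⟩ := hensels_lemma hnorm
  exact ⟨y, sub_eq_zero.mp ((hf y).symm.trans hy)⟩

theorem exists_sq_add_mul_add_sq_eq {a u : ℤ_[p]} (ha : IsUnit (a ^ 2 - 4)) (hu : IsUnit u) :
    ∃ y t : ℤ_[p], y ^ 2 + a * y * t + t ^ 2 = u := by
  have ha' : toZMod a ^ 2 ≠ 4 := by
    simpa [sub_ne_zero, map_ofNat] using toZMod_ne_zero_iff_isUnit.mpr ha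
  obtain ⟨y₀, t, hy₀t, hd⟩ :=
    ZMod.exists_sq_add_mul_add_sq_eq_and_two_mul_add_ne_zero ha'
      (toZMod_ne_zero_iff_isUnit.mpr hu)
  have hlift : ∀ x : ZMod p, toZMod (x.val : ℤ_[p]) = x := by simp
  obtain ⟨y, hy⟩ := exists_sq_add_mul_add_sq_eq_of_toZMod (a := a) (u := u) (y₀ := y₀.val)
    (t := t.val) (by simpa [hlift] using hy₀t) (by simpa [hlift, map_ofNat] using hd)
  exact ⟨y, t.val, hy⟩

theorem exists_isUnit_toZModPow_eq {n : ℕ} (hn : 0 < n) (u : (ZMod (p ^ n))ˣ) :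
    ∃ v : ℤ_[p], IsUnit v ∧ toZModPow n v = u := by
  refine ⟨((u : ZMod (p ^ n)).val : ℤ_[p]), ?_, by simp⟩
  rw [isUnit_iff, norm_natCast_eq_one_iff, ← Nat.coprime_pow_left_iff hn]
  exact (ZMod.val_coe_unit_coprime u).symm

end PadicInt

theorem exists_representation_of_unit (q n : ℕ) (hq : q.Prime) (hn : 1 ≤ n)
    (a : ℤ) (ha : ¬ (q : ℤ) ∣ a ^ 2 - 4) (u : (ZMod (q ^ n))ˣ) :
    ∃ y t : ZMod (q ^ n),
      y ^ 2 + (a : ZMod (q ^ n)) * y * t + t ^ 2 = (u : ZMod (q ^ n)) := by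
  have : Fact q.Prime := ⟨hq⟩
  have ha' : IsUnit ((a : ℤ_[q]) ^ 2 - 4) := by
    rw [PadicInt.isUnit_iff, ← Int.cast_ofNat, ← Int.cast_pow, ← Int.cast_sub,
      PadicInt.norm_intCast_eq_one_iff]
    exact ((Nat.prime_iff_prime_int.mp hq).coprime_iff_not_dvd.mpr ha).symm
  obtain ⟨v, hu, hv⟩ := PadicInt.exists_isUnit_toZModPow_eq hn u
  obtain ⟨y, t, hyt⟩ := PadicInt.exists_sq_add_mul_add_sq_eq ha' hu
  refine ⟨PadicInt.toZModPow n y, PadicInt.toZModPow n t, ?_⟩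
  rw [← hv, ← hyt]
  simp
end

section
/- Let R be a commutative ring, n a finite index type, and α, β, γ, δ n×n matrices over R with β invertible (determinant a unit). Let J be the block matrix fromBlocks 0 1 1 0 and let M = fromBlocks α β γ δ satisfy Mᵀ * J * M = J. Then: (1) the matrix δ * β⁻¹ is skew-symmetric, i.e. (δ * β⁻¹)ᵀ = −(δ * β⁻¹); and (2) for any n×n matrix φ, the block matrix (fromBlocks 1 0 φ 1) * M * (fromBlocks 1 0 (−φ) 1) has its bottom-right n×n block equal to 0 if and only if φ = −δ * β⁻¹. In particular there is exactly one matrix φ, necessarily skew-symmetric, of this form conjugating M into a matrix with vanishing bottom-right block. -/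
open Matrix

namespace Matrix

variable {k m n R : Type*} [Fintype n] [CommRing R]

theorem toBlocks₂₂_transpose_mul_fromBlocks_zero_one_one_zero_mul [DecidableEq n]
    (α : Matrix n m R) (β : Matrix n k R) (γ : Matrix n m R) (δ : Matrix n k R) :
    ((fromBlocks α β γ δ)ᵀ * (fromBlocks 0 1 1 0 : Matrix (n ⊕ n) (n ⊕ n) R) *
      fromBlocks α β γ δ).toBlocks₂₂ = δᵀ * β + βᵀ * δ := by
  simp [fromBlocks_transpose, fromBlocks_multiply]

theorem toBlocks₂₂_fromBlocks_one_zero_mul_mul_fromBlocks_one_zero [Fintype m]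
    [DecidableEq m] [DecidableEq n] (φ : Matrix n m R) (α : Matrix m m R) (β : Matrix m n R)
    (γ : Matrix n m R) (δ : Matrix n n R) :
    (fromBlocks 1 0 φ 1 * fromBlocks α β γ δ * fromBlocks 1 0 (-φ) 1).toBlocks₂₂ = φ * β + δ := by
  simp [fromBlocks_multiply]

variable [DecidableEq n]

/-- Writing `δ = S * β`, the hypothesis reads `βᵀ * (Sᵀ + S) * β = 0`. -/
theorem transpose_mul_nonsing_inv_eq_neg {β δ : Matrix n n R} (hβ : IsUnit β.det)
    (h : δᵀ * β + βᵀ * δ = 0) : (δ * β⁻¹)ᵀ = -(δ * β⁻¹) := by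
  let := invertibleOfIsUnitDet β hβ
  set S := δ * β⁻¹
  have hδ : δ = S * β := by simp [S]
  rw [hδ, transpose_mul] at h
  have hS : βᵀ * (Sᵀ + S) * β = 0 := by
    rw [← h]
    noncomm_ring
  have : Sᵀ + S = 0 := by
    simpa [Matrix.mul_assoc] using congrArg (fun X => (βᵀ)⁻¹ * X * β⁻¹) hS
  exact eq_neg_of_add_eq_zero_left this

theorem mul_add_eq_zero_iff_eq_neg_mul_nonsing_inv {β : Matrix n n R} (hβ : IsUnit β.det)
    (φ δ : Matrix m n R) : φ * β + δ = 0 ↔ φ = -(δ * β⁻¹) := by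
  let := invertibleOfIsUnitDet β hβ
  rw [add_eq_zero_iff_eq_neg, ← Matrix.neg_mul, eq_comm (a := φ),
    mul_inv_eq_iff_eq_mul_of_invertible, eq_comm]

end Matrix

theorem unique_conjugating_matrix {R : Type*} [CommRing R]
    {n : Type*} [Fintype n] [DecidableEq n] (α β γ δ : Matrix n n R)
    (hβ : IsUnit β.det)
    (hM : (Matrix.fromBlocks α β γ δ)ᵀ * Matrix.fromBlocks (0 : Matrix n n R) 1 1 0 *
        Matrix.fromBlocks α β γ δ = Matrix.fromBlocks (0 : Matrix n n R) 1 1 0) :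
    (δ * β⁻¹)ᵀ = -(δ * β⁻¹) ∧
    ∀ φ : Matrix n n R,
      (Matrix.fromBlocks 1 0 φ 1 * Matrix.fromBlocks α β γ δ *
          Matrix.fromBlocks 1 0 (-φ) 1).toBlocks₂₂ = 0 ↔ φ = -(δ * β⁻¹) := by
  have hβδ : δᵀ * β + βᵀ * δ = 0 := by
    simpa only [toBlocks₂₂_transpose_mul_fromBlocks_zero_one_one_zero_mul,
      toBlocks_fromBlocks₂₂] using congrArg toBlocks₂₂ hM
  refine ⟨transpose_mul_nonsing_inv_eq_neg hβ hβδ, fun φ => ?_⟩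
  rw [toBlocks₂₂_fromBlocks_one_zero_mul_mul_fromBlocks_one_zero]
  exact mul_add_eq_zero_iff_eq_neg_mul_nonsing_inv hβ φ δ
end

section
/- Let R be a commutative ring in which 3 is a unit, let M be an R-module, and let f : M → M be an R-linear map with f ∘ f ∘ f = −id. Then: (1) the kernel of (f + id) equals the kernel of (f + id)²; (2) the kernel of (f + id) and the range of (f + id) are complementary submodules of M (their intersection is trivial and their sum is all of M); and (3) for every m in the range of (f + id), f(f(m)) = f(m) − m. -/
/-!
Since `X ^ 3 + 1 = (X + 1) * (X ^ 2 - X + 1)` and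
`(2 - X) * (X + 1) + (X ^ 2 - X + 1) = 3`, the two factors are coprime once `3` is a unit.
For coprime `p, q` with `(p * q)(f) = 0`, the range of `p(f)` is the kernel of `q(f)`, and
`ker p(f)`, `ker q(f)` are complementary; this gives (2) and (3), and (1) follows from
`ker (f + 1) ⊓ range (f + 1) = ⊥`.
-/

open Polynomial

namespace Polynomial

variable {R M : Type*} [CommRing R] [AddCommGroup M] [Module R M]

theorem range_aeval_eq_ker_aeval_of_isCoprime (f : Module.End R M) {p q : R[X]}
    (hpq : IsCoprime p q) (hf : aeval f (p * q) = 0) :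
    LinearMap.range (aeval f p) = LinearMap.ker (aeval f q) := by
  apply le_antisymm
  · rintro _ ⟨v, rfl⟩
    rw [LinearMap.mem_ker, ← Module.End.mul_apply, ← aeval_mul, mul_comm, hf,
      LinearMap.zero_apply]
  · intro v hv
    obtain ⟨a, b, hab⟩ := hpq
    refine ⟨aeval f a v, ?_⟩
    have hsplit := congr_arg (fun r : R[X] => aeval f r v) hab
    simp only [aeval_add, aeval_mul, aeval_one, LinearMap.add_apply, Module.End.mul_apply,
      LinearMap.mem_ker.mp hv, map_zero, add_zero, Module.End.one_apply] at hsplit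
    rw [← Module.End.mul_apply, ((Commute.all p a).map (aeval f)).eq, Module.End.mul_apply,
      hsplit]

theorem isCompl_ker_range_aeval_of_isCoprime (f : Module.End R M) {p q : R[X]}
    (hpq : IsCoprime p q) (hf : aeval f (p * q) = 0) :
    IsCompl (LinearMap.ker (aeval f p)) (LinearMap.range (aeval f p)) := by
  rw [range_aeval_eq_ker_aeval_of_isCoprime f hpq hf]
  refine ⟨disjoint_ker_aeval_of_isCoprime f hpq, codisjoint_iff.mpr ?_⟩
  rw [sup_ker_aeval_eq_ker_aeval_mul_of_coprime f hpq, hf, LinearMap.ker_zero]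

theorem isCoprime_X_add_one_X_sq_sub_X_add_one (h3 : IsUnit (3 : R)) :
    IsCoprime (X + 1 : R[X]) (X ^ 2 - X + 1) := by
  obtain ⟨c, hc⟩ := h3.exists_left_inv
  refine ⟨C c * (2 - X), C c, ?_⟩
  calc C c * (2 - X) * (X + 1) + C c * (X ^ 2 - X + 1) = C (c * 3) := by
        rw [C_mul]; simp only [map_ofNat]; ring
    _ = 1 := by rw [hc, C_1]

end Polynomial

theorem LinearMap.ker_eq_ker_comp_self_of_disjoint {R M : Type*} [Semiring R] [AddCommGroup M]
    [Module R M] (g : M →ₗ[R] M) (h : Disjoint (LinearMap.ker g) (LinearMap.range g)) :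
    LinearMap.ker g = LinearMap.ker (g ∘ₗ g) := by
  refine le_antisymm (LinearMap.ker_le_ker_comp g g) fun v hv => ?_
  exact (Submodule.disjoint_def.mp h) (g v) hv ⟨v, rfl⟩

theorem decomposition_of_cube_neg_id {R : Type*} [CommRing R] (h3 : IsUnit (3 : R))
    {M : Type*} [AddCommGroup M] [Module R M]
    (f : M →ₗ[R] M) (hf : f ∘ₗ f ∘ₗ f = -LinearMap.id) :
    LinearMap.ker (f + LinearMap.id) =
      LinearMap.ker ((f + LinearMap.id) ∘ₗ (f + LinearMap.id)) ∧
    IsCompl (LinearMap.ker (f + LinearMap.id)) (LinearMap.range (f + LinearMap.id)) ∧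
    ∀ m ∈ LinearMap.range (f + LinearMap.id), f (f m) = f m - m := by
  have hcop := isCoprime_X_add_one_X_sq_sub_X_add_one h3
  have hann : aeval f ((X + 1 : R[X]) * (X ^ 2 - X + 1)) = 0 := by
    have hcube : f ^ 3 = (-1 : Module.End R M) := by rw [pow_three]; exact hf
    rw [show (X + 1) * (X ^ 2 - X + 1) = (X ^ 3 + 1 : R[X]) by ring]
    simp [hcube]
  have hp : aeval f (X + 1 : R[X]) = f + LinearMap.id := by simp [Module.End.one_eq_id]
  have hcompl := isCompl_ker_range_aeval_of_isCoprime f hcop hann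
  rw [hp] at hcompl
  refine ⟨LinearMap.ker_eq_ker_comp_self_of_disjoint _ hcompl.disjoint, hcompl, fun m hm => ?_⟩
  rw [← hp, range_aeval_eq_ker_aeval_of_isCoprime f hcop hann] at hm
  have hq : f (f m) - f m + m = 0 := by simpa [sq] using hm
  rw [← sub_eq_zero, ← hq]
  abel
end

section
/- Let R be a (possibly noncommutative) ring and let α, y be elements of R. If the 2×2 matrix !![α, 1; y, 0] over R satisfies M³ = 1 (the identity matrix), then y * α = 1, α * y = 1, and α³ = −1. -/
open Matrix

theorem companion_pow_three {R : Type*} [Ring R] (α y : R) :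
    (!![α, 1; y, 0] : Matrix (Fin 2) (Fin 2) R) ^ 3 =
      !![α ^ 3 + y * α + α * y, α ^ 2 + y; y * α ^ 2 + y ^ 2, y * α] := by
  rw [pow_succ, sq, mul_fin_two, mul_fin_two]
  noncomm_ring

theorem cube_eq_one_of_companion {R : Type*} [Ring R] (α y : R)
    (h : (!![α, 1; y, 0] : Matrix (Fin 2) (Fin 2) R) ^ 3 = 1) :
    y * α = 1 ∧ α * y = 1 ∧ α ^ 3 = -1 := by
  rw [companion_pow_three, one_fin_two] at h
  have hy : α ^ 2 + y = 0 := congr_fun (congr_fun h 0) 1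
  have hyα : y * α = 1 := congr_fun (congr_fun h 1) 1
  obtain rfl : y = -α ^ 2 := eq_neg_of_add_eq_zero_right hy
  have hα : α ^ 3 = -1 := by
    rw [← neg_eq_iff_eq_neg, ← hyα, neg_mul, ← pow_succ]
  refine ⟨hyα, ?_, hα⟩
  rw [mul_neg, ← pow_succ', hα, neg_neg]
end

section
/- Let q be a prime, p an odd prime, and F a field of characteristic q. Let ζ be a nonzero element of F whose multiplicative order is p. Then (ζ + ζ⁻¹)^q = ζ + ζ⁻¹ if and only if p divides q² − 1. (Equivalently, ζ + ζ⁻¹ is fixed by the Frobenius endomorphism, i.e. lies in the prime subfield 𝔽_q, if and only if p ∣ q² − 1.) -/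
/-! By Frobenius, `(ζ + ζ⁻¹) ^ q = ζ ^ q + (ζ ^ q)⁻¹`, and `y ↦ y + y⁻¹` identifies exactly `y` and
`y⁻¹`. So the sum is fixed iff `ζ ^ q = ζ` or `ζ ^ q = ζ⁻¹`, i.e. iff the order `p` of `ζ` divides
`q - 1` or `q + 1`, which for a prime `p` means `p ∣ (q - 1) * (q + 1) = q ^ 2 - 1`. -/

theorem add_inv_eq_add_inv_iff {K : Type*} [Field K] {x y : K} (hx : x ≠ 0) (hy : y ≠ 0) :
    y + y⁻¹ = x + x⁻¹ ↔ y = x ∨ y = x⁻¹ := by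
  have key : y * (y + y⁻¹ - (x + x⁻¹)) = (y - x) * (y - x⁻¹) := by
    field_simp
    ring
  rw [← sub_eq_zero, ← mul_eq_zero_iff_left hy, key, mul_eq_zero, sub_eq_zero, sub_eq_zero]

section OrderOf

variable {G₀ : Type*} [GroupWithZero G₀] {x : G₀}

theorem pow_eq_self_iff_orderOf_dvd_sub_one (hx : x ≠ 0) {n : ℕ} (hn : n ≠ 0) :
    x ^ n = x ↔ orderOf x ∣ n - 1 := by
  rw [orderOf_dvd_iff_pow_eq_one, ← mul_eq_right₀ hx, ← pow_succ, Nat.sub_add_cancel (by omega)]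

theorem pow_eq_inv_iff_orderOf_dvd_add_one (hx : x ≠ 0) (n : ℕ) :
    x ^ n = x⁻¹ ↔ orderOf x ∣ n + 1 := by
  rw [orderOf_dvd_iff_pow_eq_one, pow_succ, mul_eq_one_iff_eq_inv₀ hx]

end OrderOf

theorem Nat.Prime.dvd_sq_sub_one_iff {p : ℕ} (hp : p.Prime) (q : ℕ) :
    p ∣ q ^ 2 - 1 ↔ p ∣ q - 1 ∨ p ∣ q + 1 := by
  rw [← one_pow 2, Nat.sq_sub_sq, hp.dvd_mul, or_comm, one_pow]

theorem frobenius_fixes_sum_iff_general (q p : ℕ) (hq : q.Prime) (hp : p.Prime)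
    {F : Type*} [Field F] [CharP F q] (ζ : F) (hζ : ζ ≠ 0) (hord : orderOf ζ = p) :
    (ζ + ζ⁻¹) ^ q = ζ + ζ⁻¹ ↔ p ∣ q ^ 2 - 1 := by
  have : Fact q.Prime := ⟨hq⟩
  rw [add_pow_char, inv_pow, add_inv_eq_add_inv_iff hζ (pow_ne_zero q hζ),
    pow_eq_self_iff_orderOf_dvd_sub_one hζ hq.ne_zero, pow_eq_inv_iff_orderOf_dvd_add_one hζ, hord,
    hp.dvd_sq_sub_one_iff]

theorem frobenius_fixes_sum_iff (q p : ℕ) (hq : q.Prime) (hp : p.Prime) (hodd : Odd p)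
    {F : Type*} [Field F] [CharP F q] (ζ : F) (hζ : ζ ≠ 0) (hord : orderOf ζ = p) :
    (ζ + ζ⁻¹) ^ q = ζ + ζ⁻¹ ↔ p ∣ q ^ 2 - 1 :=
  frobenius_fixes_sum_iff_general q p hq hp ζ hζ hord
end

section
/- Let p be an odd prime. Consider the set T of pairs (ξ, {a, b}) where ξ is an element of ℤ/pℤ and {a, b} is an unordered pair of elements of ℤ/pℤ with a ≠ b and a + b ≠ 0. The group (ℤ/pℤ)ˣ of units acts on T by g · (ξ, {a, b}) = (g⁻² * ξ, {g * a, g * b}). Then the number of orbits of this action equals (p² − p)/2. -/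
/-- The sum of the two entries of an unordered pair. -/
def Sym2.pairSum {α : Type*} [AddCommMonoid α] : Sym2 α → α :=
  Sym2.lift ⟨fun a b => a + b, fun a b => add_comm a b⟩

/-! Write `s = a + b` and `d = (a - b) ^ 2`. Scaling by a unit `g` sends `s ↦ g s`, `d ↦ g² d` and
`ξ ↦ g⁻² ξ`, so `(s² ξ, d / s²)` is constant on orbits. It separates orbits: since `2 ≠ 0` a pair is
determined by `s` and `d`, and `g = s₂ / s₁` moves one point onto any other with the same invariant.
Its values are exactly `K × {nonzero squares}`, which has `q (q - 1) / 2` elements. -/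

open Function

theorem Nat.card_quot_eq_of_surjective {α β : Type*} {r : α → α → Prop} (f : α → β)
    (hf : Surjective f) (hr : ∀ x y, r x y ↔ f x = f y) : Nat.card (Quot r) = Nat.card β := by
  obtain rfl : r = Setoid.ker f := by ext x y; exact hr x y
  exact Nat.card_congr (Setoid.quotientKerEquivOfSurjective f hf)

lemma Units.isSquare_val_iff {M : Type*} [CommMonoid M] (u : Mˣ) :
    IsSquare (u : M) ↔ IsSquare u := by
  refine ⟨fun ⟨v, hv⟩ => ?_, fun ⟨v, hv⟩ => ⟨v, by rw [hv, Units.val_mul]⟩⟩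
  obtain ⟨w, rfl⟩ : IsUnit v := isUnit_of_mul_isUnit_left (hv ▸ u.isUnit)
  exact ⟨w, Units.ext hv⟩

lemma FiniteField.card_nonzero_isSquare {K : Type*} [Field K] [Fintype K] (hK : ringChar K ≠ 2) :
    Nat.card {u : K // u ≠ 0 ∧ IsSquare u} = (Fintype.card K - 1) / 2 := by
  have hrange (w : Kˣ) : w ∈ (powMonoidHom 2 : Kˣ →* Kˣ).range ↔ IsSquare (w : K) := by
    rw [Units.isSquare_val_iff, isSquare_iff_exists_sq]
    simp [eq_comm]
  let e : {u : K // u ≠ 0 ∧ IsSquare u} ≃ (powMonoidHom 2 : Kˣ →* Kˣ).range :=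
    { toFun u := ⟨Units.mk0 u u.2.1, (hrange _).2 u.2.2⟩
      invFun w := ⟨w.1, w.1.ne_zero, (hrange _).1 w.2⟩
      left_inv u := rfl
      right_inv w := Subtype.ext (Units.ext rfl) }
  have hodd : Odd (Fintype.card K) := Nat.odd_iff.2 (FiniteField.odd_card_of_char_ne_two hK)
  rw [Nat.card_congr e, IsCyclic.card_powMonoidHom_range, Nat.card_units, Nat.card_eq_fintype_card,
    Nat.gcd_eq_right (even_iff_two_dvd.1 (Nat.Odd.sub_odd hodd odd_one))]

namespace Sym2

@[simp] lemma pairSum_mk {α : Type*} [AddCommMonoid α] (a b : α) : pairSum s(a, b) = a + b :=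
  rfl

lemma pairSum_map_mul {R : Type*} [Semiring R] (g : R) (z : Sym2 R) :
    pairSum (z.map (g * ·)) = g * pairSum z := by
  induction z using Sym2.ind with
  | _ a b => simp [mul_add]

variable {R : Type*} [CommRing R]

def pairDiffSq : Sym2 R → R :=
  lift ⟨fun a b => (a - b) ^ 2, fun a b => by ring⟩

@[simp] lemma pairDiffSq_mk (a b : R) : pairDiffSq s(a, b) = (a - b) ^ 2 :=
  rfl

lemma pairDiffSq_map_mul (g : R) (z : Sym2 R) :
    pairDiffSq (z.map (g * ·)) = g ^ 2 * pairDiffSq z := by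
  induction z using Sym2.ind with
  | _ a b => simp only [map_mk, pairDiffSq_mk]; ring

lemma isSquare_pairDiffSq (z : Sym2 R) : IsSquare (pairDiffSq z) := by
  induction z using Sym2.ind with
  | _ a b => exact ⟨a - b, sq _⟩

lemma pairDiffSq_ne_zero [NoZeroDivisors R] {z : Sym2 R} (h : ¬ z.IsDiag) : pairDiffSq z ≠ 0 := by
  induction z using Sym2.ind with
  | _ a b => simpa [sub_eq_zero] using h

lemma eq_of_pairSum_eq_of_pairDiffSq_eq [IsDomain R] (h2 : (2 : R) ≠ 0) {z w : Sym2 R}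
    (hs : pairSum z = pairSum w) (hd : pairDiffSq z = pairDiffSq w) : z = w := by
  induction z using Sym2.ind with | _ a b =>
  induction w using Sym2.ind with | _ c d =>
  simp only [pairSum_mk, pairDiffSq_mk] at hs hd
  rcases sq_eq_sq_iff_eq_or_eq_neg.1 hd with h | h
  · obtain rfl : a = c := mul_left_cancel₀ h2 (by linear_combination hs + h)
    obtain rfl : b = d := by linear_combination hs
    rfl
  · obtain rfl : a = d := mul_left_cancel₀ h2 (by linear_combination hs + h)
    obtain rfl : b = c := by linear_combination hs
    exact eq_swap

end Sym2

section UnitScaling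

variable (K : Type*) [Field K]

abbrev WeightedPair := K × {z : Sym2 K // ¬ z.IsDiag ∧ Sym2.pairSum z ≠ 0}

def unitScalingRel (t₁ t₂ : WeightedPair K) : Prop :=
  ∃ g : Kˣ, t₂.1 = ((g⁻¹ : Kˣ) : K) ^ 2 * t₁.1 ∧
    (t₂.2 : Sym2 K) = Sym2.map (fun a => (g : K) * a) (t₁.2 : Sym2 K)

variable {K}

def scalingInvariant (t : WeightedPair K) : K × {u : K // u ≠ 0 ∧ IsSquare u} :=
  let s := Sym2.pairSum t.2.1
  (s ^ 2 * t.1, ⟨Sym2.pairDiffSq t.2.1 / s ^ 2,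
    div_ne_zero (Sym2.pairDiffSq_ne_zero t.2.2.1) (pow_ne_zero 2 t.2.2.2),
    (Sym2.isSquare_pairDiffSq _).div (.sq s)⟩)

lemma scalingInvariant_eq_of_unitScalingRel {t₁ t₂ : WeightedPair K}
    (h : unitScalingRel K t₁ t₂) : scalingInvariant t₁ = scalingInvariant t₂ := by
  obtain ⟨g, hξ, hz⟩ := h
  have hs : Sym2.pairSum t₂.2.1 = g * Sym2.pairSum t₁.2.1 := by
    rw [hz, Sym2.pairSum_map_mul]
  have hd : Sym2.pairDiffSq t₂.2.1 = g ^ 2 * Sym2.pairDiffSq t₁.2.1 := by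
    rw [hz, Sym2.pairDiffSq_map_mul]
  have hg : (g : K) ≠ 0 := g.ne_zero
  simp only [scalingInvariant, Prod.ext_iff, Subtype.ext_iff, hs, hd, hξ, Units.val_inv_eq_inv_val]
  constructor
  · field_simp
  · rw [mul_pow, mul_div_mul_left _ _ (pow_ne_zero 2 hg)]

lemma unitScalingRel_of_scalingInvariant_eq (h2 : (2 : K) ≠ 0) {t₁ t₂ : WeightedPair K}
    (h : scalingInvariant t₁ = scalingInvariant t₂) : unitScalingRel K t₁ t₂ := by
  simp only [scalingInvariant, Prod.ext_iff, Subtype.ext_iff] at h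
  obtain ⟨hfst, hsnd⟩ := h
  have hs₁ := t₁.2.2.2
  have hs₂ := t₂.2.2.2
  refine ⟨Units.mk0 _ (div_ne_zero hs₂ hs₁), ?_, ?_⟩
  · simp only [Units.val_inv_eq_inv_val, Units.val_mk0]
    field_simp
    linear_combination -hfst
  · refine Sym2.eq_of_pairSum_eq_of_pairDiffSq_eq h2 ?_ ?_
    · rw [Sym2.pairSum_map_mul, Units.val_mk0]
      field_simp
    · rw [Sym2.pairDiffSq_map_mul, Units.val_mk0]
      field_simp at hsnd ⊢
      linear_combination -hsnd

lemma scalingInvariant_surjective (h2 : (2 : K) ≠ 0) :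
    Surjective (scalingInvariant (K := K)) := by
  rintro ⟨ξ, u, hu, r, rfl⟩
  have hr : r ≠ 0 := by rintro rfl; simp at hu
  obtain ⟨a, ha⟩ : ∃ a : K, 2 * a = 1 + r := ⟨(1 + r) / 2, mul_div_cancel₀ _ h2⟩
  have hdiff : a - (1 - a) = r := by linear_combination ha
  refine ⟨(ξ, ⟨s(a, 1 - a), ?_, by simp⟩), ?_⟩
  · rwa [Sym2.mk_isDiag_iff, ← sub_eq_zero, hdiff]
  · simp [scalingInvariant, hdiff, sq]

theorem card_quot_unitScalingRel [Fintype K] (hK : ringChar K ≠ 2) :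
    Nat.card (Quot (unitScalingRel K)) = Fintype.card K * ((Fintype.card K - 1) / 2) := by
  have h2 := Ring.two_ne_zero hK
  rw [Nat.card_quot_eq_of_surjective scalingInvariant (scalingInvariant_surjective h2)
    fun _ _ => ⟨scalingInvariant_eq_of_unitScalingRel, unitScalingRel_of_scalingInvariant_eq h2⟩,
    Nat.card_prod, Nat.card_eq_fintype_card, FiniteField.card_nonzero_isSquare hK]

end UnitScaling

theorem card_orbits_of_unit_action (p : ℕ) (hp : p.Prime) (hodd : Odd p) :
    Nat.card (Quot (fun t₁ t₂ :
        ZMod p × {z : Sym2 (ZMod p) // ¬ z.IsDiag ∧ Sym2.pairSum z ≠ 0} =>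
      ∃ g : (ZMod p)ˣ,
        t₂.1 = ((g⁻¹ : (ZMod p)ˣ) : ZMod p) ^ 2 * t₁.1 ∧
        (t₂.2 : Sym2 (ZMod p)) =
          Sym2.map (fun a => (g : ZMod p) * a) (t₁.2 : Sym2 (ZMod p)))) =
    (p ^ 2 - p) / 2 := by
  have : Fact p.Prime := ⟨hp⟩
  have hchar : ringChar (ZMod p) ≠ 2 := by
    rw [ZMod.ringChar_zmod_n]
    rintro rfl
    exact absurd hodd (by decide)
  calc _ = p * ((p - 1) / 2) :=
      (card_quot_unitScalingRel hchar).trans (by rw [ZMod.card])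
    _ = (p ^ 2 - p) / 2 := by
      rw [← Nat.mul_div_assoc _ (even_iff_two_dvd.1 (Nat.Odd.sub_odd hodd odd_one)),
        Nat.mul_sub_one, sq]
end
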